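/- Let m ≥ 3 and k ≥ 1, and write λ = 2k. The number of proper colorings of the signed graph B_m^1 with color set {−k,…,−1,1,…,k} equals λ·(λ−2)·γ_m(λ). -/

import Mathlib

/-- Vertices of the book graph `B(m,n)`: `Sum.inl false` is `u`, `Sum.inl true` is `v`,
and `Sum.inr (i, j)` is the vertex `u_{j+1}^{i+1}`. -/
abbrev BookVertex (m n : ℕ) := Bool ⊕ (Fin n × Fin (m - 2))

/-- Adjacency relation of the book graph `B(m,n)`. -/
def bookAdj (m n : ℕ) : BookVertex m n → BookVertex m n → Prop
  | Sum.inl a, Sum.inl b => a ≠ b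
  | Sum.inl false, Sum.inr (_, j) => j.val = 0
  | Sum.inl true, Sum.inr (_, j) => j.val = m - 3
  | Sum.inr (_, j), Sum.inl false => j.val = 0
  | Sum.inr (_, j), Sum.inl true => j.val = m - 3
  | Sum.inr (i, j), Sum.inr (i', j') => i = i' ∧ (j.val + 1 = j'.val ∨ j'.val + 1 = j.val)

/-- The signature `σ_l` of `B(m,n)`: exactly the edges `u u_1^1, …, u u_1^l` are negative. -/
def sigmaL (m n l : ℕ) : BookVertex m n → BookVertex m n → ℤ
  | Sum.inl false, Sum.inr (i, j) => if j.val = 0 ∧ i.val < l then -1 else 1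
  | Sum.inr (i, j), Sum.inl false => if j.val = 0 ∧ i.val < l then -1 else 1
  | _, _ => 1

/-- The signature of `B^{uv}(m,n)`: exactly the edge `uv` is negative. -/
def sigmaUV (m n : ℕ) : BookVertex m n → BookVertex m n → ℤ
  | Sum.inl _, Sum.inl _ => -1
  | _, _ => 1

/-- `γ_m(x) = ∑_{i=0}^{m-2} (-1)^i (x-1)^{m-2-i}`. -/
def gammaP (m : ℕ) (x : ℤ) : ℤ := ∑ i ∈ Finset.range (m - 1), (-1) ^ i * (x - 1) ^ (m - 2 - i)

/-
Listing the vertices along the cycle `u, u_1, …, u_{m-2}, v` turns a coloring of `B_m^1` into a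
proper coloring of a path on `m` vertices whose end colors `a`, `b` satisfy `a ∉ {b, -b}`.
Let `N_ℓ(a, b)` count the proper colorings, from `λ` colors, of a path with `ℓ` edges running from
color `a` to color `b`. Removing the last vertex leaves a coloring starting at `a` and not ending
in `b`; as there are `(λ - 1)^ℓ` colorings starting at `a`, `N_{ℓ+1}(a, b) + N_ℓ(a, b) = (λ - 1)^ℓ`.
`γ` obeys the same recursion, so `N_{m-1}(a, b) = γ_m(λ)` for `a ≠ b`. Since `0` is not a color,
`b ≠ -b`, and each `b` leaves `λ - 2` choices of `a`.
-/

open Finset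

section PathColorings

variable {α : Type*} [DecidableEq α]

def pathColorings (S : Finset α) (ℓ : ℕ) : Finset (Fin (ℓ + 1) → α) :=
  {f ∈ Fintype.piFinset fun _ => S | ∀ i : Fin ℓ, f i.castSucc ≠ f i.succ}

variable {S : Finset α}

lemma mem_pathColorings_apply {ℓ : ℕ} {f : Fin (ℓ + 1) → α} (hf : f ∈ pathColorings S ℓ)
    (i : Fin (ℓ + 1)) : f i ∈ S :=
  Fintype.mem_piFinset.1 (mem_filter.1 hf).1 i

lemma snoc_mem_pathColorings {ℓ : ℕ} {g : Fin (ℓ + 1) → α} {x : α} :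
    (Fin.snoc g x : Fin (ℓ + 2) → α) ∈ pathColorings S (ℓ + 1) ↔
      g ∈ pathColorings S ℓ ∧ x ∈ S ∧ g (Fin.last ℓ) ≠ x := by
  simp only [pathColorings, mem_filter, Fintype.mem_piFinset, Fin.forall_fin_succ' (n := ℓ + 1),
    Fin.forall_fin_succ' (n := ℓ), Fin.snoc_castSucc, Fin.snoc_last, Fin.succ_last,
    Fin.succ_castSucc]
  tauto

lemma card_pathColorings_from_to_succ_add (ℓ : ℕ) (a : α) {b : α} (hb : b ∈ S) :
    #{f ∈ pathColorings S (ℓ + 1) | f 0 = a ∧ f (Fin.last (ℓ + 1)) = b} +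
      #{f ∈ pathColorings S ℓ | f 0 = a ∧ f (Fin.last ℓ) = b} =
      #{f ∈ pathColorings S ℓ | f 0 = a} := by
  rw [← card_filter_add_card_filter_not (s := {f ∈ pathColorings S ℓ | f 0 = a})
    (fun f => f (Fin.last ℓ) = b), filter_filter, filter_filter, add_comm]
  congr 1
  refine card_nbij' Fin.init (fun g => (Fin.snoc g b : Fin (ℓ + 2) → α)) ?_ ?_ ?_ ?_
  · intro f hf
    simp only [coe_filter, Set.mem_ofPred_eq] at hf ⊢
    obtain ⟨hf, rfl, rfl⟩ := hf
    rw [← Fin.snoc_init_self f, snoc_mem_pathColorings] at hf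
    exact ⟨hf.1, rfl, hf.2.2⟩
  · intro g hg
    simp only [coe_filter, Set.mem_ofPred_eq] at hg ⊢
    obtain ⟨hg, rfl, hgb⟩ := hg
    exact ⟨snoc_mem_pathColorings.2 ⟨hg, hb, hgb⟩, rfl, Fin.snoc_last _ _⟩
  · intro f hf
    simp only [coe_filter, Set.mem_ofPred_eq] at hf
    rw [← hf.2.2]
    exact Fin.snoc_init_self f
  · intro g _
    exact Fin.init_snoc _ _

lemma sum_card_pathColorings_from_to (ℓ : ℕ) (a : α) :
    ∑ b ∈ S, #{f ∈ pathColorings S ℓ | f 0 = a ∧ f (Fin.last ℓ) = b} =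
      #{f ∈ pathColorings S ℓ | f 0 = a} := by
  rw [card_eq_sum_card_fiberwise (f := fun f => f (Fin.last ℓ)) (t := S)]
  · simp only [filter_filter]
  exact fun f hf => mem_pathColorings_apply (mem_filter.1 hf).1 _

lemma card_pathColorings_from (ℓ : ℕ) {a : α} (ha : a ∈ S) :
    (#{f ∈ pathColorings S ℓ | f 0 = a} : ℤ) = (#S - 1) ^ ℓ := by
  induction ℓ with
  | zero =>
    suffices {f ∈ pathColorings S 0 | f 0 = a} = {fun _ => a} by simp [this]
    ext f
    simp only [pathColorings, mem_filter, Fintype.mem_piFinset, mem_singleton, IsEmpty.forall_iff,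
      and_true]
    constructor
    · exact fun h => funext fun i => by rw [Fin.fin_one_eq_zero i, h.2]
    · rintro rfl
      exact ⟨fun _ => ha, rfl⟩
  | succ ℓ ih =>
    have step : ∀ b ∈ S,
        (#{f ∈ pathColorings S (ℓ + 1) | f 0 = a ∧ f (Fin.last (ℓ + 1)) = b} : ℤ) =
          #{f ∈ pathColorings S ℓ | f 0 = a} -
            #{f ∈ pathColorings S ℓ | f 0 = a ∧ f (Fin.last ℓ) = b} :=
      fun b hb => eq_sub_of_add_eq (by exact_mod_cast card_pathColorings_from_to_succ_add ℓ a hb)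
    calc (#{f ∈ pathColorings S (ℓ + 1) | f 0 = a} : ℤ)
        = ∑ b ∈ S, (#{f ∈ pathColorings S (ℓ + 1) | f 0 = a ∧ f (Fin.last (ℓ + 1)) = b} : ℤ) := by
          rw [← sum_card_pathColorings_from_to, Nat.cast_sum]
      _ = #S * #{f ∈ pathColorings S ℓ | f 0 = a} - #{f ∈ pathColorings S ℓ | f 0 = a} := by
          rw [sum_congr rfl step, sum_sub_distrib, sum_const, ← Nat.cast_sum,
            sum_card_pathColorings_from_to, nsmul_eq_mul]
      _ = (#S - 1) ^ (ℓ + 1) := by rw [ih]; ring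

lemma gammaP_one (x : ℤ) : gammaP 1 x = 0 := by
  simp [gammaP]

lemma gammaP_add_two (ℓ : ℕ) (x : ℤ) : gammaP (ℓ + 2) x = (x - 1) ^ ℓ - gammaP (ℓ + 1) x := by
  rw [gammaP, gammaP, show ℓ + 2 - 1 = ℓ + 1 by omega, show ℓ + 1 - 1 = ℓ by omega,
    sum_range_succ', eq_sub_iff_add_eq, add_right_comm, ← sum_add_distrib]
  rw [sum_eq_zero fun i hi => ?_]
  · simp
  rw [pow_succ, show ℓ + 2 - 2 - (i + 1) = ℓ + 1 - 2 - i by omega]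
  ring

lemma card_pathColorings_from_to (ℓ : ℕ) {a b : α} (ha : a ∈ S) (hb : b ∈ S) (hab : a ≠ b) :
    (#{f ∈ pathColorings S ℓ | f 0 = a ∧ f (Fin.last ℓ) = b} : ℤ) = gammaP (ℓ + 1) #S := by
  induction ℓ with
  | zero =>
    rw [gammaP_one, Nat.cast_eq_zero, card_eq_zero, filter_eq_empty_iff]
    rintro f - ⟨rfl, h⟩
    exact hab h
  | succ ℓ ih =>
    rw [gammaP_add_two, ← ih, ← card_pathColorings_from ℓ ha,
      ← card_pathColorings_from_to_succ_add ℓ a hb]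
    push_cast
    ring

lemma card_pathColorings_ends_avoid (σ : α → α) (hσS : ∀ b ∈ S, σ b ∈ S) (hσ : ∀ b ∈ S, σ b ≠ b)
    (ℓ : ℕ) :
    (#{f ∈ pathColorings S ℓ | f 0 ≠ f (Fin.last ℓ) ∧ f 0 ≠ σ (f (Fin.last ℓ))} : ℤ) =
      #S * (#S - 2) * gammaP (ℓ + 1) #S := by
  have fiber : ∀ b ∈ S, (#{f ∈ pathColorings S ℓ |
      (f 0 ≠ f (Fin.last ℓ) ∧ f 0 ≠ σ (f (Fin.last ℓ))) ∧ f (Fin.last ℓ) = b} : ℤ) =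
        (#S - 2) * gammaP (ℓ + 1) #S := by
    intro b hb
    have hcard : (#((S.erase b).erase (σ b)) : ℤ) = #S - 2 := by
      have h1 := card_erase_add_one (mem_erase.2 ⟨hσ b hb, hσS b hb⟩)
      have h2 := card_erase_add_one hb
      omega
    have hstart : ∀ a ∈ (S.erase b).erase (σ b), (#{f ∈ {f ∈ pathColorings S ℓ |
        (f 0 ≠ f (Fin.last ℓ) ∧ f 0 ≠ σ (f (Fin.last ℓ))) ∧ f (Fin.last ℓ) = b} | f 0 = a} : ℤ) =
          gammaP (ℓ + 1) #S := by
      intro a ha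
      simp only [mem_erase] at ha
      rw [filter_filter, ← card_pathColorings_from_to ℓ ha.2.2 hb ha.2.1]
      congr 2
      ext f
      simp only [mem_filter]
      constructor
      · rintro ⟨hf, ⟨-, rfl⟩, rfl⟩
        exact ⟨hf, rfl, rfl⟩
      · rintro ⟨hf, rfl, rfl⟩
        exact ⟨hf, ⟨⟨ha.2.1, ha.1⟩, rfl⟩, rfl⟩
    rw [card_eq_sum_card_fiberwise (f := fun f => f 0) (t := (S.erase b).erase (σ b)), Nat.cast_sum,
      sum_congr rfl hstart, sum_const, nsmul_eq_mul, hcard]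
    intro f hf
    simp only [mem_coe, mem_filter] at hf
    obtain ⟨hf, ⟨hb', hσ'⟩, rfl⟩ := hf
    exact mem_erase.2 ⟨hσ', mem_erase.2 ⟨hb', mem_pathColorings_apply hf 0⟩⟩
  rw [card_eq_sum_card_fiberwise (f := fun f => f (Fin.last ℓ)) (t := S)]
  · simp only [filter_filter]
    rw [Nat.cast_sum, sum_congr rfl fiber, sum_const, nsmul_eq_mul]
    ring
  · exact fun f hf => mem_pathColorings_apply (mem_filter.1 hf).1 _

end PathColorings

def bookSpineIndex (d : ℕ) : BookVertex (d + 3) 1 → Fin (d + 3)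
  | Sum.inl false => 0
  | Sum.inl true => Fin.last (d + 2)
  | Sum.inr (_, j) => ⟨j.val + 1, by omega⟩

lemma bookSpineIndex_bijective (d : ℕ) : (bookSpineIndex d).Bijective := by
  refine (Fintype.bijective_iff_injective_and_card _).2 ⟨?_, by simp; omega⟩
  rintro ((_ | _) | ⟨i, j⟩) ((_ | _) | ⟨i', j'⟩) h <;>
    simp [bookSpineIndex, Fin.ext_iff, Fin.fin_one_eq_zero] at h ⊢ <;> omega

lemma bookAdj_iff_bookSpineIndex (d : ℕ) (x y : BookVertex (d + 3) 1) :
    (bookAdj (d + 3) 1 x y ∧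
      ¬((x = Sum.inl false ∧ y = Sum.inl true) ∨ (x = Sum.inl true ∧ y = Sum.inl false))) ↔
      ((bookSpineIndex d x).val + 1 = (bookSpineIndex d y).val ∨
        (bookSpineIndex d y).val + 1 = (bookSpineIndex d x).val) := by
  rcases x with ((_ | _) | ⟨i, j⟩) <;> rcases y with ((_ | _) | ⟨i', j'⟩) <;>
    simp [bookAdj, bookSpineIndex, Fin.fin_one_eq_zero] <;> omega

lemma forall_castSucc_ne_succ_iff {β : Type*} {ℓ : ℕ} (f : Fin (ℓ + 1) → β) :
    (∀ i : Fin ℓ, f i.castSucc ≠ f i.succ) ↔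
      ∀ i j : Fin (ℓ + 1), (i.val + 1 = j.val ∨ j.val + 1 = i.val) → f i ≠ f j := by
  refine ⟨fun h i j hij => ?_, fun h i => h _ _ (Or.inl rfl)⟩
  rcases hij with hij | hij
  · obtain ⟨i', rfl, rfl⟩ : ∃ i' : Fin ℓ, i'.castSucc = i ∧ i'.succ = j :=
      ⟨⟨i, by omega⟩, rfl, Fin.ext hij⟩
    exact h i'
  · obtain ⟨j', rfl, rfl⟩ : ∃ j' : Fin ℓ, j'.castSucc = j ∧ j'.succ = i :=
      ⟨⟨j, by omega⟩, rfl, Fin.ext hij⟩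
    exact (h j').symm

lemma card_bookColorings_eq (d : ℕ) (S : Finset ℤ) :
    Nat.card {c : BookVertex (d + 3) 1 → ℤ // (∀ x, c x ∈ S) ∧
        (∀ x y, bookAdj (d + 3) 1 x y →
          ¬((x = Sum.inl false ∧ y = Sum.inl true) ∨ (x = Sum.inl true ∧ y = Sum.inl false)) →
            c x ≠ c y) ∧
        c (Sum.inl false) ≠ c (Sum.inl true) ∧ c (Sum.inl false) ≠ -c (Sum.inl true)} =
      #{f ∈ pathColorings S (d + 2) |
        f 0 ≠ f (Fin.last (d + 2)) ∧ f 0 ≠ -f (Fin.last (d + 2))} := by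
  let e := Equiv.ofBijective _ (bookSpineIndex_bijective d)
  rw [← Nat.card_eq_finsetCard]
  refine (Nat.card_congr (Equiv.subtypeEquiv (e.symm.arrowCongr (Equiv.refl ℤ)) fun f => ?_)).symm
  have hadj : (∀ x y, bookAdj (d + 3) 1 x y →
      ¬((x = Sum.inl false ∧ y = Sum.inl true) ∨ (x = Sum.inl true ∧ y = Sum.inl false)) →
        f (e x) ≠ f (e y)) ↔
      ∀ i j : Fin (d + 3), (i.val + 1 = j.val ∨ j.val + 1 = i.val) → f i ≠ f j :=
    Equiv.forall₂_congr e e <| by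
      intro x y
      rw [← and_imp, bookAdj_iff_bookSpineIndex]
      rfl
  simp only [Equiv.arrowCongr_apply, Equiv.symm_symm, Equiv.coe_refl, Function.comp_apply, id,
    pathColorings, mem_filter, Fintype.mem_piFinset, forall_castSucc_ne_succ_iff, hadj,
    e.forall_congr_right (q := fun i => f i ∈ S)]
  simp only [e, Equiv.ofBijective_apply, bookSpineIndex]
  tauto

noncomputable def signedColors (k : ℕ) : Finset ℤ := (Icc (-(k : ℤ)) k).erase 0

lemma mem_signedColors {k : ℕ} {x : ℤ} : x ∈ signedColors k ↔ x ≠ 0 ∧ |x| ≤ k := by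
  simp [signedColors, abs_le, and_comm]

lemma card_signedColors (k : ℕ) : #(signedColors k) = 2 * k := by
  rw [signedColors, card_erase_of_mem (by simp), Int.card_Icc]
  omega

theorem statement13_general (m : ℕ) (hm : 3 ≤ m) (k : ℕ) :
    (Nat.card {c : BookVertex m 1 → ℤ //
        (∀ x, c x ≠ 0 ∧ |c x| ≤ (k : ℤ)) ∧
        (∀ x y, bookAdj m 1 x y →
          ¬((x = Sum.inl false ∧ y = Sum.inl true) ∨
            (x = Sum.inl true ∧ y = Sum.inl false)) → c x ≠ c y) ∧
        c (Sum.inl false) ≠ c (Sum.inl true) ∧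
        c (Sum.inl false) ≠ - c (Sum.inl true)} : ℤ) =
      (2 * (k : ℤ)) * (2 * (k : ℤ) - 2) * gammaP m (2 * (k : ℤ)) := by
  obtain ⟨d, rfl⟩ : ∃ d, m = d + 3 := ⟨m - 3, by omega⟩
  have hcount := card_bookColorings_eq d (signedColors k)
  simp only [mem_signedColors] at hcount
  rw [hcount, card_pathColorings_ends_avoid (fun x => -x), card_signedColors]
  · push_cast
    rfl
  · intro x hx
    obtain ⟨hx0, hxk⟩ := mem_signedColors.1 hx
    exact mem_signedColors.2 ⟨neg_ne_zero.2 hx0, by rwa [abs_neg]⟩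
  · intro x hx h
    exact (mem_signedColors.1 hx).1 (by omega)

/-- With `λ = 2k`, the number of zero-free proper colorings of `B_m^1` (the book graph
`B(m,1)` with the edge `uv` replaced by a digon with one positive and one negative edge)
with color set `{-k, …, -1, 1, …, k}` is `λ(λ-2)·γ_m(λ)`. -/
theorem statement13 (m : ℕ) (hm : 3 ≤ m) (k : ℕ) (hk : 1 ≤ k) :
    (Nat.card {c : BookVertex m 1 → ℤ //
        (∀ x, c x ≠ 0 ∧ |c x| ≤ (k : ℤ)) ∧
        (∀ x y, bookAdj m 1 x y →
          ¬((x = Sum.inl false ∧ y = Sum.inl true) ∨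
            (x = Sum.inl true ∧ y = Sum.inl false)) → c x ≠ c y) ∧
        c (Sum.inl false) ≠ c (Sum.inl true) ∧
        c (Sum.inl false) ≠ - c (Sum.inl true)} : ℤ) =
      (2 * (k : ℤ)) * (2 * (k : ℤ) - 2) * gammaP m (2 * (k : ℤ)) :=
  statement13_general m hm k
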